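/- arXiv:2108.11066 — 2 statements merged into one kernel-verified Lean document; each statement's English description precedes it below -/
import Mathlib

section
/- Lemma 1(a): The cut posterior minimizes the Kullback–Leibler divergence to the full posterior over all joint distributions with the prescribed first marginal. Precisely, for every probability measure q ∈ F_cut on Φ × H (i.e., with first marginal q.fst = μ), one has KL(π_cut ‖ π) ≤ KL(q ‖ π), so π_cut = μ ⊗ π(·|·) is a minimizer of q ↦ KL(q ‖ π) over F_cut. -/
open MeasureTheory ProbabilityTheory
open scoped ENNReal NNReal Classical

/-- Kullback–Leibler divergence with values in `[0,∞]`: equal to `∫ log (dν/dρ) dν` when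
`ν ≪ ρ` (and this integral is well defined), and `∞` otherwise. -/

noncomputable def klDiv {α : Type*} [MeasurableSpace α] (ν ρ : Measure α) : ℝ≥0∞ :=
  if ν ≪ ρ ∧ Integrable (llr ν ρ) ν then ENNReal.ofReal (∫ x, llr ν ρ x ∂ν) else ∞

/-! Disintegrating `π = π.fst ⊗ₘ π.condKernel`, the cut posterior and `π` share their conditional
kernel, so the chain rule reduces `KL(μ ⊗ₘ π.condKernel ‖ π)` to `KL(μ ‖ π.fst)`. As `μ = q.fst`, the
data processing inequality along `Prod.fst` bounds this by `KL(q ‖ π)`. On measures of equal total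
mass, `klDiv` agrees with Mathlib's `InformationTheory.klDiv`, whose correction term
`ρ.real univ - ν.real univ` then vanishes. -/

lemma klDiv_eq_informationTheory_klDiv {α : Type*} [MeasurableSpace α] {ν ρ : Measure α}
    (h : ν Set.univ = ρ Set.univ) : klDiv ν ρ = InformationTheory.klDiv ν ρ := by
  by_cases hνρ : ν ≪ ρ ∧ Integrable (llr ν ρ) ν
  · rw [klDiv, if_pos hνρ, InformationTheory.klDiv_of_ac_of_integrable hνρ.1 hνρ.2,
      measureReal_def, measureReal_def, h, add_sub_cancel_right]
  · rw [klDiv, if_neg hνρ, eq_comm, InformationTheory.klDiv_eq_top_iff]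
    exact fun hac hint ↦ hνρ ⟨hac, hint⟩

lemma InformationTheory.klDiv_fst_compProd_condKernel_le {α β : Type*} [MeasurableSpace α]
    [MeasurableSpace β] [StandardBorelSpace β] [Nonempty β]
    (q ρ : Measure (α × β)) [IsFiniteMeasure q] [IsFiniteMeasure ρ] :
    klDiv (q.fst ⊗ₘ ρ.condKernel) ρ ≤ klDiv q ρ :=
  calc klDiv (q.fst ⊗ₘ ρ.condKernel) ρ
        = klDiv (q.fst ⊗ₘ ρ.condKernel) (ρ.fst ⊗ₘ ρ.condKernel) := by rw [ρ.disintegrate]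
    _ = klDiv (q.map Prod.fst) (ρ.map Prod.fst) := klDiv_compProd_left _ _ _
    _ ≤ klDiv q ρ := klDiv_map_le q ρ measurable_fst

theorem cut_posterior_minimizes_kl_general
    {Φ H : Type*} [MeasurableSpace Φ]
    [MeasurableSpace H] [StandardBorelSpace H] [Nonempty H]
    (π : Measure (Φ × H)) [IsProbabilityMeasure π]
    (μ : Measure Φ)
    (q : Measure (Φ × H)) [IsProbabilityMeasure q]
    (hq : q.fst = μ) :
    klDiv (μ ⊗ₘ π.condKernel) π ≤ klDiv q π := by
  subst hq
  rw [klDiv_eq_informationTheory_klDiv (by simp), klDiv_eq_informationTheory_klDiv (by simp)]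
  exact InformationTheory.klDiv_fst_compProd_condKernel_le q π

/-- Lemma 1(a): the cut posterior `π_cut = μ ⊗ₘ π.condKernel` minimizes the KL divergence to the
full posterior `π` over all joint probability measures `q` whose first marginal is `μ`. -/
theorem cut_posterior_minimizes_kl
    {Φ H : Type*} [MeasurableSpace Φ] [StandardBorelSpace Φ]
    [MeasurableSpace H] [StandardBorelSpace H] [Nonempty H]
    (π : Measure (Φ × H)) [IsProbabilityMeasure π]
    (μ : Measure Φ) [IsProbabilityMeasure μ]
    (q : Measure (Φ × H)) [IsProbabilityMeasure q]
    (hq : q.fst = μ) :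
    klDiv (μ ⊗ₘ π.condKernel) π ≤ klDiv q π :=
  cut_posterior_minimizes_kl_general π μ q hq
end

section
/- Uniqueness of the minimizer in Lemma 1(a): suppose KL(μ ‖ π.fst) < ∞ and q ∈ F_cut satisfies KL(q ‖ π) = KL(μ ‖ π.fst). Then the conditional kernels agree μ-almost everywhere, i.e., q(·|φ) = π(·|φ) for μ-a.e. φ ∈ Φ, and consequently q = π_cut. -/
/-!
Writing `q = μ ⊗ q(·|·)` and `π = π.fst ⊗ π(·|·)`, the chain rule for the Kullback–Leibler
divergence gives `KL(q‖π) = KL(μ‖π.fst) + KL(μ ⊗ q(·|·) ‖ μ ⊗ π(·|·))`. Since the first term is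
finite, the hypothesis forces the second to vanish, so `q = μ ⊗ π(·|·)`, and uniqueness of
disintegrations gives `q(·|φ) = π(·|φ)` for `μ`-a.e. `φ`.
-/

open MeasureTheory ProbabilityTheory
open scoped ENNReal NNReal Classical

namespace InformationTheory

lemma compProd_eq_of_klDiv_compProd_eq_klDiv {α β : Type*} [MeasurableSpace α]
    [MeasurableSpace β] {μ ν : Measure α} {κ η : Kernel α β} [IsFiniteMeasure μ]
    [IsFiniteMeasure ν] [IsMarkovKernel κ] [IsMarkovKernel η] (hfin : klDiv μ ν ≠ ∞)
    (h : klDiv (μ ⊗ₘ κ) (ν ⊗ₘ η) = klDiv μ ν) : μ ⊗ₘ κ = μ ⊗ₘ η := by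
  rw [klDiv_compProd_eq_add] at h
  have hcond : klDiv (μ ⊗ₘ κ) (μ ⊗ₘ η) = 0 :=
    (ENNReal.add_right_inj hfin).mp (h.trans (add_zero _).symm)
  exact klDiv_eq_zero_iff.mp hcond

end InformationTheory

theorem cut_posterior_unique_minimizer_general
    {Φ H : Type*} [MeasurableSpace Φ]
    [MeasurableSpace H] [StandardBorelSpace H] [Nonempty H]
    (π : Measure (Φ × H)) [IsProbabilityMeasure π]
    (μ : Measure Φ) [IsProbabilityMeasure μ]
    (q : Measure (Φ × H)) [IsProbabilityMeasure q]
    (hq : q.fst = μ)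
    (hfin : klDiv μ π.fst < ∞)
    (hmin : klDiv q π = klDiv μ π.fst) :
    (∀ᵐ φ ∂μ, q.condKernel φ = π.condKernel φ) ∧ q = μ ⊗ₘ π.condKernel := by
  have hq_disint : μ ⊗ₘ q.condKernel = q := hq ▸ q.disintegrate q.condKernel
  have hπ_disint : π.fst ⊗ₘ π.condKernel = π := π.disintegrate π.condKernel
  have hfin' : InformationTheory.klDiv μ π.fst ≠ ∞ := by
    rwa [← klDiv_eq_informationTheory_klDiv (by simp), ← lt_top_iff_ne_top]
  have hmin' : InformationTheory.klDiv (μ ⊗ₘ q.condKernel) (π.fst ⊗ₘ π.condKernel) =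
      InformationTheory.klDiv μ π.fst := by
    rwa [hq_disint, hπ_disint, ← klDiv_eq_informationTheory_klDiv (by simp),
      ← klDiv_eq_informationTheory_klDiv (by simp)]
  have hcut := InformationTheory.compProd_eq_of_klDiv_compProd_eq_klDiv hfin' hmin'
  exact ⟨Kernel.ae_eq_of_compProd_eq hcut, hq_disint.symm.trans hcut⟩

/-- Uniqueness of the minimizer in Lemma 1(a): if `KL(μ‖π.fst) < ∞` and a probability measure `q`
with first marginal `μ` attains `KL(q‖π) = KL(μ‖π.fst)`, then its disintegration kernel agrees
with that of `π` for `μ`-almost every `φ`, and consequently `q` equals the cut posterior. -/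
theorem cut_posterior_unique_minimizer
    {Φ H : Type*} [MeasurableSpace Φ] [StandardBorelSpace Φ]
    [MeasurableSpace H] [StandardBorelSpace H] [Nonempty H]
    (π : Measure (Φ × H)) [IsProbabilityMeasure π]
    (μ : Measure Φ) [IsProbabilityMeasure μ]
    (q : Measure (Φ × H)) [IsProbabilityMeasure q]
    (hq : q.fst = μ)
    (hfin : klDiv μ π.fst < ∞)
    (hmin : klDiv q π = klDiv μ π.fst) :
    (∀ᵐ φ ∂μ, q.condKernel φ = π.condKernel φ) ∧ q = μ ⊗ₘ π.condKernel :=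
  cut_posterior_unique_minimizer_general π μ q hq hfin hmin
end
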